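/- For every integer k ≥ 1, the generating polynomials for Siladić-coloured partitions satisfy G_{(2k+1)_{ab}}(q;a,b) = G_{(2k)_b}(q;a,b) + a b q^{2k+1} G_{(2k−1)_a}(q;a,b). -/

import Mathlib

/-- The five colours of the weighted-words version of Siladić's theorem. -/
inductive SilColor : Type
  | a | b | ab | a2 | b2
  deriving DecidableEq

open SilColor

/-- Row of the difference matrix A for a part of odd size, of the given colour. -/
def silRowOdd : SilColor → SilColor → ℕ
  | a,  a => 2 | a,  b => 2 | a,  ab => 1 | a,  a2 => 2 | a,  b2 => 2
  | b2, a => 2 | b2, b => 3 | b2, ab => 2 | b2, a2 => 2 | b2, b2 => 4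
  | b,  a => 1 | b,  b => 2 | b,  ab => 1 | b,  a2 => 2 | b,  b2 => 2
  | a2, a => 3 | a2, b => 3 | a2, ab => 3 | a2, a2 => 4 | a2, b2 => 4
  | ab, a => 2 | ab, b => 3 | ab, ab => 2 | ab, a2 => 2 | ab, b2 => 3

/-- Row of the difference matrix A for a part of even size, of the given colour
(the colours a² and b² never occur on even parts, so those rows are irrelevant). -/
def silRowEven : SilColor → SilColor → ℕ
  | ab, a => 2 | ab, b => 2 | ab, ab => 2 | ab, a2 => 3 | ab, b2 => 3
  | a,  a => 2 | a,  b => 2 | a,  ab => 2 | a,  a2 => 3 | a,  b2 => 3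
  | b,  a => 1 | b,  b => 2 | b,  ab => 1 | b,  a2 => 1 | b,  b2 => 3
  | a2, a => 3 | a2, b => 3 | a2, ab => 3 | a2, a2 => 4 | a2, b2 => 4
  | b2, a => 2 | b2, b => 3 | b2, ab => 2 | b2, a2 => 2 | b2, b2 => 4

/-- Minimal difference A(x,y) between a part of size k and colour x and the next part of
colour y. -/
def silMinDiff (k : ℕ) (x y : SilColor) : ℕ :=
  if k % 2 = 1 then silRowOdd x y else silRowEven x y

/-- A valid coloured part: a positive integer; the colours a², b² occur only on odd
integers; the integer 1 may only carry colour a. -/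
def SilValidPart (p : ℕ × SilColor) : Prop :=
  0 < p.1 ∧ ((p.2 = a2 ∨ p.2 = b2) → p.1 % 2 = 1) ∧ (p.1 = 1 → p.2 = a)

/-- A Siladić-coloured partition: a finite sequence of valid coloured parts satisfying the
difference conditions of the matrix A. -/
def IsSiladicColoured (l : List (ℕ × SilColor)) : Prop :=
  (∀ p ∈ l, SilValidPart p) ∧
    l.Chain' (fun p q => q.1 + silMinDiff p.1 p.2 q.2 ≤ p.1)

/-- The number partitioned. -/
def silN (l : List (ℕ × SilColor)) : ℕ := (l.map Prod.fst).sum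

/-- The statistic u: number of parts coloured a or ab plus twice the number of parts
coloured a². -/
def silU (l : List (ℕ × SilColor)) : ℕ :=
  l.countP (fun p => decide (p.2 = a ∨ p.2 = ab)) + 2 * l.countP (fun p => decide (p.2 = a2))

/-- The statistic v: number of parts coloured b or ab plus twice the number of parts
coloured b². -/
def silV (l : List (ℕ × SilColor)) : ℕ :=
  l.countP (fun p => decide (p.2 = b ∨ p.2 = ab)) + 2 * l.countP (fun p => decide (p.2 = b2))

/-- The rank of the coloured integer k_x in the total order
1_{ab} < 1_a < 1_{b²} < 1_b < 2_{ab} < 2_a < 3_{a²} < 2_b < 3_{ab} < ⋯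
(obtained via the dilation k_a ↦ 4k−3, k_b ↦ 4k−1, k_{ab} ↦ 4k−4, k_{a²} ↦ 4k−6,
k_{b²} ↦ 4k−2). -/
def silRank (k : ℕ) (x : SilColor) : ℤ :=
  4 * k - (match x with | ab => 4 | a => 3 | b2 => 2 | b => 1 | a2 => 6)

/-- The generating polynomial G_{k_x}(q;a,b) for Siladić-coloured partitions with largest
part at most k_x, as a (polynomial) multivariate power series in the variables
q (index 0), a (index 1), b (index 2): the coefficient of a^u b^v q^n is the number of
Siladić-coloured partitions of n with statistics u, v and largest part at most k_x. -/
noncomputable def silG (k : ℕ) (x : SilColor) : MvPowerSeries (Fin 3) ℤ :=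
  fun m =>
    (Nat.card {l : List (ℕ × SilColor) // IsSiladicColoured l ∧
      (∀ p ∈ l, silRank p.1 p.2 ≤ silRank k x) ∧
      silN l = m 0 ∧ silU l = m 1 ∧ silV l = m 2} : ℤ)


/-!
In the order on coloured integers, `(2k)_b` is immediately followed by `(2k+1)_{ab}`, and the
parts of a Siladić-coloured partition strictly decrease in this order. So a partition with
largest part at most `(2k+1)_{ab}` either has largest part at most `(2k)_b`, or starts with
`(2k+1)_{ab}`. In the second case the row of `A` for an odd part coloured `ab` says exactly that
the next part is at most `(2k-1)_a`, so deleting the first part is a bijection onto the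
partitions counted by `G_{(2k-1)_a}`, and it divides the weight by `a b q^{2k+1}`.
-/

section GeneratingSeries

variable {α β σ R : Type*} [Semiring R]

/-- The generating series `∑_{x ∈ S} X^{w x}`; an infinite fibre of `w` contributes `0`. -/
noncomputable def genSeries (w : α → σ →₀ ℕ) (S : Set α) : MvPowerSeries σ R :=
  fun m => ((S ∩ w ⁻¹' {m}).ncard : R)

lemma genSeries_union (w : α → σ →₀ ℕ) {S T : Set α} (hST : Disjoint S T)
    (hfin : ∀ m, ((S ∪ T) ∩ w ⁻¹' {m}).Finite) :
    (genSeries w (S ∪ T) : MvPowerSeries σ R) = genSeries w S + genSeries w T := by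
  ext m
  simp only [MvPowerSeries.coeff_apply, map_add, genSeries]
  have hfin_m := hfin m
  rw [Set.union_inter_distrib_right] at hfin_m ⊢
  rw [Set.ncard_union_eq (hST.mono Set.inter_subset_left Set.inter_subset_left)
    (hfin_m.subset Set.subset_union_left) (hfin_m.subset Set.subset_union_right),
    Nat.cast_add]

lemma genSeries_image (v : α → σ →₀ ℕ) (w : β → σ →₀ ℕ) {f : α → β} (hf : f.Injective)
    (δ : σ →₀ ℕ) (hw : ∀ x, w (f x) = v x + δ) (S : Set α) :
    (genSeries w (f '' S) : MvPowerSeries σ R) = MvPowerSeries.monomial δ 1 * genSeries v S := by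
  ext m
  rw [MvPowerSeries.coeff_monomial_mul, one_mul]
  simp only [MvPowerSeries.coeff_apply, genSeries]
  split_ifs with hδ
  · have hfiber : f '' S ∩ w ⁻¹' {m} = f '' (S ∩ v ⁻¹' {m - δ}) := by
      ext y
      simp only [Set.mem_inter_iff, Set.mem_image, Set.mem_preimage, Set.mem_singleton_iff]
      constructor
      · rintro ⟨⟨x, hx, rfl⟩, hxm⟩
        exact ⟨x, ⟨hx, ((tsub_eq_iff_eq_add_of_le hδ).2 (hw x ▸ hxm).symm).symm⟩, rfl⟩
      · rintro ⟨x, ⟨hx, hxm⟩, rfl⟩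
        exact ⟨⟨x, hx, rfl⟩, hw x ▸ ((tsub_eq_iff_eq_add_of_le hδ).1 hxm.symm).symm⟩
    rw [hfiber, Set.ncard_image_of_injective _ hf]
  · have hfiber : f '' S ∩ w ⁻¹' {m} = ∅ := by
      refine Set.eq_empty_of_forall_notMem ?_
      rintro _ ⟨⟨x, -, rfl⟩, hxm⟩
      exact hδ (hxm ▸ hw x ▸ le_add_self)
    rw [hfiber, Set.ncard_empty, Nat.cast_zero]

end GeneratingSeries

lemma List.finite_length_le_of_forall_mem {α : Type*} {s : Set α} (hs : s.Finite) (n : ℕ) :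
    {l : List α | l.length ≤ n ∧ ∀ x ∈ l, x ∈ s}.Finite := by
  have : Finite s := hs.to_subtype
  refine ((List.finite_length_le s n).image (List.map Subtype.val)).subset ?_
  rintro l ⟨hlen, hl⟩
  lift l to List s using hl
  exact ⟨l, by simpa using hlen, rfl⟩

instance : Fintype SilColor :=
  ⟨{a, b, ab, a2, b2}, fun x => by cases x <;> simp⟩

def silPartitions (k : ℕ) (x : SilColor) : Set (List (ℕ × SilColor)) :=
  {l | IsSiladicColoured l ∧ ∀ p ∈ l, silRank p.1 p.2 ≤ silRank k x}

noncomputable def silWeight (l : List (ℕ × SilColor)) : Fin 3 →₀ ℕ :=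
  Finsupp.single 0 (silN l) + Finsupp.single 1 (silU l) + Finsupp.single 2 (silV l)

lemma silWeight_eq_iff (l : List (ℕ × SilColor)) (m : Fin 3 →₀ ℕ) :
    silWeight l = m ↔ silN l = m 0 ∧ silU l = m 1 ∧ silV l = m 2 := by
  constructor
  · rintro rfl
    simp [silWeight]
  · rintro ⟨hN, hU, hV⟩
    ext i
    fin_cases i <;> simp [silWeight, hN, hU, hV]

lemma silG_eq_genSeries (k : ℕ) (x : SilColor) :
    silG k x = genSeries silWeight (silPartitions k x) := by
  ext m
  simp only [MvPowerSeries.coeff_apply, silG, genSeries, ← Nat.card_coe_set_eq]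
  exact congrArg Nat.cast (Nat.card_congr (Equiv.subtypeEquivRight fun l => by
    simp [silPartitions, silWeight_eq_iff, and_assoc]))

lemma silWeight_cons_ab (n : ℕ) (t : List (ℕ × SilColor)) :
    silWeight ((n, ab) :: t) =
      silWeight t + (Finsupp.single 1 1 + Finsupp.single 2 1 + Finsupp.single 0 n) := by
  ext i
  fin_cases i <;> simp [silWeight, silN, silU, silV] <;> ring

lemma finite_silPartitions_inter_silWeight_preimage (k : ℕ) (x : SilColor) (m : Fin 3 →₀ ℕ) :
    (silPartitions k x ∩ silWeight ⁻¹' {m}).Finite := by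
  refine ((List.finite_length_le_of_forall_mem ((Set.finite_Iic (m 0)).prod Set.finite_univ)
    (m 0))).subset ?_
  rintro l ⟨⟨⟨hvalid, -⟩, -⟩, hm⟩
  have hN : (l.map Prod.fst).sum = m 0 := ((silWeight_eq_iff l m).1 hm).1
  refine ⟨?_, fun p hp => ⟨?_, trivial⟩⟩
  · rw [← hN, ← List.length_map Prod.fst]
    refine List.length_le_sum_of_one_le _ ?_
    simp only [List.mem_map]
    rintro _ ⟨p, hp, rfl⟩
    exact (hvalid p hp).1
  · exact hN ▸ List.le_sum_of_mem (List.mem_map_of_mem (f := Prod.fst) hp)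

-- A gap of two in size already decreases the rank; a gap of one fails to do so only after
-- a part coloured `a²`, whose row of `A` has entries at least 3.
lemma silRank_lt_of_silMinDiff {p q : ℕ × SilColor} (h : q.1 + silMinDiff p.1 p.2 q.2 ≤ p.1) :
    silRank q.1 q.2 < silRank p.1 p.2 := by
  obtain ⟨n, x⟩ := p
  obtain ⟨n', y⟩ := q
  unfold silMinDiff at h
  split at h <;> cases x <;> cases y <;> simp only [silRowOdd, silRowEven] at h <;>
    simp only [silRank] <;> omega

lemma IsSiladicColoured.pairwise_silRank_gt {l : List (ℕ × SilColor)}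
    (hl : IsSiladicColoured l) :
    l.Pairwise (fun p q => silRank q.1 q.2 < silRank p.1 p.2) := by
  have : IsTrans (ℕ × SilColor) fun p q => silRank q.1 q.2 < silRank p.1 p.2 :=
    ⟨fun _ _ _ h h' => h'.trans h⟩
  exact (hl.2.imp fun _ _ => silRank_lt_of_silMinDiff).pairwise

lemma isSiladicColoured_cons_iff (p : ℕ × SilColor) (t : List (ℕ × SilColor)) :
    IsSiladicColoured (p :: t) ↔ SilValidPart p ∧ IsSiladicColoured t ∧
      ∀ q ∈ t.head?, q.1 + silMinDiff p.1 p.2 q.2 ≤ p.1 := by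
  rw [IsSiladicColoured, IsSiladicColoured, List.forall_mem_cons]
  exact ⟨fun ⟨⟨hp, ht⟩, hc⟩ => ⟨hp, ⟨ht, hc.tail⟩, (List.isChain_cons.1 hc).1⟩,
    fun ⟨hp, ⟨ht, hc⟩, hhead⟩ => ⟨⟨hp, ht⟩, List.isChain_cons.2 ⟨hhead, hc⟩⟩⟩

lemma eq_cons_of_mem_silPartitions {k : ℕ} {x : SilColor} {l : List (ℕ × SilColor)}
    (hl : l ∈ silPartitions k x) (hmem : (k, x) ∈ l) : ∃ t, l = (k, x) :: t := by
  obtain _ | ⟨p, t⟩ := l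
  · simp at hmem
  · rcases List.mem_cons.1 hmem with rfl | ht
    · exact ⟨t, rfl⟩
    · exact absurd (hl.2 p List.mem_cons_self)
        ((List.pairwise_cons.1 hl.1.pairwise_silRank_gt).1 _ ht).not_ge

section OddAb

variable {k : ℕ}

lemma silRank_le_odd_ab_iff (p : ℕ × SilColor) :
    silRank p.1 p.2 ≤ silRank (2 * k + 1) ab ↔
      silRank p.1 p.2 ≤ silRank (2 * k) b ∨ p = (2 * k + 1, ab) := by
  obtain ⟨n, x⟩ := p
  cases x <;> simp [silRank] <;> omega

lemma silMinDiff_odd_ab_le_iff (hk : 1 ≤ k) (q : ℕ × SilColor) :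
    q.1 + silMinDiff (2 * k + 1) ab q.2 ≤ 2 * k + 1 ↔ silRank q.1 q.2 ≤ silRank (2 * k - 1) a := by
  obtain ⟨n, x⟩ := q
  have hodd : (2 * k + 1) % 2 = 1 := by omega
  cases x <;> simp only [silMinDiff, hodd, if_true, silRowOdd, silRank] <;> omega

lemma cons_odd_ab_mem_silPartitions_iff (hk : 1 ≤ k) (t : List (ℕ × SilColor)) :
    (2 * k + 1, ab) :: t ∈ silPartitions (2 * k + 1) ab ↔ t ∈ silPartitions (2 * k - 1) a := by
  simp only [silPartitions, Set.mem_ofPred_eq, isSiladicColoured_cons_iff, List.forall_mem_cons]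
  constructor
  · rintro ⟨⟨-, ht, hchain⟩, -⟩
    refine ⟨ht, ?_⟩
    cases t with
    | nil => simp
    | cons q t =>
      have hq : silRank q.1 q.2 ≤ silRank (2 * k - 1) a :=
        (silMinDiff_odd_ab_le_iff hk q).1 (hchain q rfl)
      rw [List.forall_mem_cons]
      exact ⟨hq, fun p hp => ((List.pairwise_cons.1 ht.pairwise_silRank_gt).1 p hp).le.trans hq⟩
  · rintro ⟨ht, hrank⟩
    have hhead : SilValidPart (2 * k + 1, ab) := ⟨by omega, by simp, by omega⟩
    refine ⟨⟨hhead, ht, fun q hq => ?_⟩, le_rfl, fun p hp => (hrank p hp).trans ?_⟩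
    · have hqt := List.mem_of_mem_head? hq
      exact (silMinDiff_odd_ab_le_iff hk q).2 (hrank q hqt)
    · simp only [silRank]
      omega

lemma silPartitions_odd_ab (hk : 1 ≤ k) :
    silPartitions (2 * k + 1) ab =
      silPartitions (2 * k) b ∪ List.cons (2 * k + 1, ab) '' silPartitions (2 * k - 1) a := by
  ext l
  simp only [Set.mem_union, Set.mem_image]
  constructor
  · intro hl
    by_cases hb : ∀ p ∈ l, silRank p.1 p.2 ≤ silRank (2 * k) b
    · exact Or.inl ⟨hl.1, hb⟩
    · obtain ⟨p, hp, hgt⟩ := not_forall₂.1 hb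
      obtain rfl : p = (2 * k + 1, ab) :=
        ((silRank_le_odd_ab_iff p).1 (hl.2 p hp)).resolve_left hgt
      obtain ⟨t, rfl⟩ := eq_cons_of_mem_silPartitions hl hp
      exact Or.inr ⟨t, (cons_odd_ab_mem_silPartitions_iff hk t).1 hl, rfl⟩
  · rintro (hl | ⟨t, ht, rfl⟩)
    · exact ⟨hl.1, fun p hp => (silRank_le_odd_ab_iff p).2 (Or.inl (hl.2 p hp))⟩
    · exact (cons_odd_ab_mem_silPartitions_iff hk t).2 ht

lemma disjoint_silPartitions_even_b_cons_odd_ab :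
    Disjoint (silPartitions (2 * k) b) (List.cons (2 * k + 1, ab) '' silPartitions (2 * k - 1) a) := by
  rw [Set.disjoint_left]
  rintro _ hl ⟨t, -, rfl⟩
  have := hl.2 _ List.mem_cons_self
  simp only [silRank] at this
  omega

end OddAb

open MvPowerSeries in
/-- G_{(2k+1)_{ab}}(q;a,b) = G_{(2k)_b}(q;a,b) + a b q^{2k+1} G_{(2k−1)_a}(q;a,b)
for k ≥ 1. -/
theorem silG_rec (k : ℕ) (hk : 1 ≤ k) :
    silG (2 * k + 1) ab =
      silG (2 * k) b +
        X 1 * X 2 * (X 0 : MvPowerSeries (Fin 3) ℤ) ^ (2 * k + 1) * silG (2 * k - 1) a := by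
  have hmonomial : X 1 * X 2 * (X 0 : MvPowerSeries (Fin 3) ℤ) ^ (2 * k + 1) =
      monomial (Finsupp.single 1 1 + Finsupp.single 2 1 + Finsupp.single 0 (2 * k + 1)) 1 := by
    rw [X_def, X_def, X_pow_eq, monomial_mul_monomial, monomial_mul_monomial, one_mul, one_mul]
  rw [silG_eq_genSeries, silG_eq_genSeries, silG_eq_genSeries, silPartitions_odd_ab hk,
    genSeries_union _ disjoint_silPartitions_even_b_cons_odd_ab
      (silPartitions_odd_ab hk ▸ finite_silPartitions_inter_silWeight_preimage _ _),
    genSeries_image silWeight silWeight List.cons_injective _ (silWeight_cons_ab _), hmonomial]
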